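/- arXiv:1803.03508 — 4 statements merged into one kernel-verified Lean document; each statement's English description precedes it below -/
import Mathlib

section
/- Let p be an odd integer and let a_1,...,a_r be integers such that a_{i1} - a_{i2} is coprime to p for all i1 ≠ i2. Then the determinant of the r×r Vandermonde matrix V with entries V[i][j] = x^{(j-1)·a_i} (indices 1-based, entries in F_2[x]) equals the product over all pairs i1 < i2 of (x^{a_{i1}} + x^{a_{i2}}), and this determinant is coprime to M_p(x) in F_2[x]. -/
open Polynomial

lemma coprime_factor_aux (p : ℕ) (hp : Odd p) (b c : ℕ)
    (h : Nat.gcd ((b:ℤ)-(c:ℤ)).natAbs p = 1) :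
    IsCoprime ((X : Polynomial (ZMod 2)) ^ b + X ^ c)
      (∑ i ∈ Finset.range p, (X : Polynomial (ZMod 2)) ^ i) := by
  refine (Polynomial.isCoprime_iff_aeval_ne_zero_of_isAlgClosed (k := ZMod 2)
    (AlgebraicClosure (ZMod 2)) _ _).mpr fun t => ?_
  by_contra hcon
  push_neg at hcon
  obtain ⟨h1, h2⟩ := hcon
  simp only [map_add, map_pow, map_sum, aeval_X] at h1 h2
  have hpK : ((p : AlgebraicClosure (ZMod 2))) = 1 := by
    obtain ⟨k, hk⟩ := hp
    subst hk
    push_cast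
    have h2K : (2 : AlgebraicClosure (ZMod 2)) = 0 := CharTwo.two_eq_zero
    rw [h2K]
    ring
  have ht0 : t ≠ 0 := by
    rintro rfl
    rw [Finset.sum_eq_single 0 (fun i _ hi => by simp [zero_pow hi])
      (by simp [hp.pos.ne'])] at h2
    simp at h2
  have htp : t ^ p = 1 := by
    have := geom_sum_mul t p
    rw [h2, zero_mul] at this
    exact sub_eq_zero.mp this.symm
  have htbc : t ^ b = t ^ c := by
    have h2K : (2 : AlgebraicClosure (ZMod 2)) = 0 := CharTwo.two_eq_zero
    linear_combination h1 - t ^ c * h2K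
  have hkey : ∀ b c : ℕ, c ≤ b → t ^ b = t ^ c → t ^ (b - c) = 1 := by
    intro b c hle he
    have : t ^ c * t ^ (b - c) = t ^ c * 1 := by
      rw [mul_one, ← pow_add, Nat.add_sub_cancel' hle, he]
    exact mul_left_cancel₀ (pow_ne_zero _ ht0) this
  have hd : t ^ ((b:ℤ)-(c:ℤ)).natAbs = 1 := by
    rcases le_total c b with hle | hle
    · have : ((b:ℤ)-(c:ℤ)).natAbs = b - c := by omega
      rw [this]; exact hkey b c hle htbc
    · have : ((b:ℤ)-(c:ℤ)).natAbs = c - b := by omega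
      rw [this]; exact hkey c b hle htbc.symm
  have ho : orderOf t ∣ 1 := h ▸ Nat.dvd_gcd (orderOf_dvd_of_pow_eq_one hd)
    (orderOf_dvd_of_pow_eq_one htp)
  have ht1 : t = 1 := orderOf_eq_one_iff.mp (Nat.dvd_one.mp ho)
  rw [ht1] at h2
  simp [hpK] at h2

theorem vandermonde_det_and_coprime (p r : ℕ) (hp : Odd p) (a : Fin r → ℕ)
    (ha : ∀ i j : Fin r, i ≠ j → Int.gcd ((a i : ℤ) - (a j : ℤ)) (p : ℤ) = 1) :
    (Matrix.of fun i j : Fin r => (X : Polynomial (ZMod 2)) ^ ((j : ℕ) * a i)).det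
        = ∏ q ∈ Finset.univ.filter (fun q : Fin r × Fin r => q.1 < q.2),
            ((X : Polynomial (ZMod 2)) ^ a q.1 + X ^ a q.2) ∧
      IsCoprime (Matrix.of fun i j : Fin r => (X : Polynomial (ZMod 2)) ^ ((j : ℕ) * a i)).det
        (∑ i ∈ Finset.range p, (X : Polynomial (ZMod 2)) ^ i) := by
  have hdet : (Matrix.of fun i j : Fin r => (X : Polynomial (ZMod 2)) ^ ((j : ℕ) * a i)).det
      = ∏ q ∈ Finset.univ.filter (fun q : Fin r × Fin r => q.1 < q.2),
          ((X : Polynomial (ZMod 2)) ^ a q.1 + X ^ a q.2) := by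
    have h1 : (Matrix.of fun i j : Fin r => (X : Polynomial (ZMod 2)) ^ ((j : ℕ) * a i))
        = Matrix.vandermonde (fun i => (X : Polynomial (ZMod 2)) ^ a i) := by
      ext i j; simp [Matrix.vandermonde, ← pow_mul, mul_comm]
    rw [h1, Matrix.det_vandermonde]
    rw [Finset.prod_filter]
    rw [← Finset.univ_product_univ, Finset.prod_product]
    refine Finset.prod_congr rfl fun i _ => ?_
    rw [← Finset.prod_filter, Finset.filter_lt_eq_Ioi]
    refine Finset.prod_congr rfl fun j _ => ?_
    have : (X : Polynomial (ZMod 2)) ^ a j - X ^ a i = X ^ a j + X ^ a i := by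
      rw [sub_eq_add_neg, CharTwo.neg_eq]
    rw [this, add_comm]
  refine ⟨hdet, ?_⟩
  rw [hdet]
  refine IsCoprime.prod_left fun q hq => ?_
  rw [Finset.mem_filter] at hq
  have hne : q.1 ≠ q.2 := ne_of_lt hq.2
  have := ha q.1 q.2 hne
  refine coprime_factor_aux p hp _ _ ?_
  simpa [Int.gcd, Int.natAbs_natCast] using this
end

section
/- Let p be an odd integer and a_1,...,a_r integers with all pairwise differences coprime to p. Then the r×r Vandermonde matrix V with entries V[i][j] = x^{(j-1)a_i}, viewed over the quotient ring F_2[x]/M_p(x), is invertible. -/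
/-!
Write `ξ` for the class of `x`. Since `x^p - 1 = (x - 1) M_p(x)` we have `ξ^p = 1`, and since
`M_p(1) = p = 1` in `𝔽₂`, `M_p(x) ≡ 1 mod (x - 1)`, so `ξ - 1` is a unit. If `k` is coprime to `p`,
then modulo `ξ^k - 1` both `ξ^k` and `ξ^p` are `1`, hence so is `ξ^{gcd(k,p)} = ξ`; thus `ξ^k - 1`
divides `ξ - 1` and is a unit too. Hence every factor
`ξ^{a_j} - ξ^{a_i} = ξ^{a_i} (ξ^{a_j - a_i} - 1)` of the Vandermonde determinant is a unit.
-/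

open Polynomial

section PowSubOne

variable {R : Type*} [CommRing R] {ξ : R} {n : ℕ}

theorem pow_sub_one_dvd_sub_one_of_coprime (hξ : ξ ^ n = 1) {k : ℕ} (hk : k.Coprime n) :
    ξ ^ k - 1 ∣ ξ - 1 := by
  let π := Ideal.Quotient.mk (Ideal.span {ξ ^ k - 1})
  have hk_one : π ξ ^ k = 1 := by
    rw [← map_pow, ← map_one π, Ideal.Quotient.eq]
    exact Ideal.mem_span_singleton_self _
  have hn_one : π ξ ^ n = 1 := by rw [← map_pow, hξ, map_one]
  have h_one : π ξ = 1 := by simpa [hk] using pow_gcd_eq_one.mpr ⟨hk_one, hn_one⟩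
  rw [← Ideal.mem_span_singleton, ← Ideal.Quotient.eq, h_one, map_one]

theorem isUnit_pow_sub_one_of_coprime (hξ : ξ ^ n = 1) (hξ1 : IsUnit (ξ - 1)) {k : ℕ}
    (hk : k.Coprime n) : IsUnit (ξ ^ k - 1) :=
  isUnit_of_dvd_unit (pow_sub_one_dvd_sub_one_of_coprime hξ hk) hξ1

theorem isUnit_pow_sub_pow_of_gcd_eq_one (hn : n ≠ 0) (hξ : ξ ^ n = 1) (hξ1 : IsUnit (ξ - 1))
    {b c : ℕ} (h : Int.gcd ((c : ℤ) - b) n = 1) : IsUnit (ξ ^ c - ξ ^ b) := by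
  wlog hbc : b ≤ c generalizing b c
  · rw [← neg_sub]
    exact (this (by rwa [← neg_sub, Int.neg_gcd]) (le_of_not_ge hbc)).neg
  obtain ⟨k, rfl⟩ := Nat.exists_eq_add_of_le hbc
  have hk : k.Coprime n := by simpa using h
  rw [pow_add, ← mul_sub_one]
  exact ((IsUnit.of_pow_eq_one hξ hn).pow b).mul (isUnit_pow_sub_one_of_coprime hξ hξ1 hk)

end PowSubOne

section GeomSumQuotient

variable {R : Type*} [CommRing R] (p : ℕ)

theorem mk_X_pow_eq_one_of_geom_sum :
    Ideal.Quotient.mk (Ideal.span {∑ i ∈ Finset.range p, (X : R[X]) ^ i}) X ^ p = 1 := by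
  rw [← map_pow, ← map_one (Ideal.Quotient.mk _), Ideal.Quotient.eq, ← geom_sum_mul]
  exact Ideal.mul_mem_right _ _ (Ideal.mem_span_singleton_self _)

theorem isUnit_mk_X_sub_one_of_geom_sum (hp : IsUnit (p : R)) :
    IsUnit (Ideal.Quotient.mk (Ideal.span {∑ i ∈ Finset.range p, (X : R[X]) ^ i}) X - 1) := by
  set M := ∑ i ∈ Finset.range p, (X : R[X]) ^ i
  obtain ⟨q, hq⟩ : X - C 1 ∣ M - C (p : R) := by
    simpa [M, eval_finsetSum] using X_sub_C_dvd_sub_C_eval (p := M) (a := 1)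
  have hM : Ideal.Quotient.mk (Ideal.span {M}) M = 0 :=
    Ideal.Quotient.eq_zero_iff_mem.mpr (Ideal.mem_span_singleton_self M)
  have hfactor := congrArg (Ideal.Quotient.mk (Ideal.span {M})) hq
  simp only [map_sub, map_mul, map_one, map_natCast, hM, zero_sub] at hfactor
  refine isUnit_of_mul_isUnit_left (y := Ideal.Quotient.mk _ q) ?_
  rw [← hfactor]
  exact (map_natCast (algebraMap R (R[X] ⧸ Ideal.span {M})) p ▸ hp.map _).neg

end GeomSumQuotient

theorem vandermonde_invertible_mod_Mp (p r : ℕ) (hp : Odd p) (a : Fin r → ℕ)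
    (ha : ∀ i j : Fin r, i ≠ j → Int.gcd ((a i : ℤ) - (a j : ℤ)) (p : ℤ) = 1) :
    IsUnit (Matrix.of fun i j : Fin r =>
      Ideal.Quotient.mk
        (Ideal.span ({∑ i ∈ Finset.range p, (X : Polynomial (ZMod 2)) ^ i} :
          Set (Polynomial (ZMod 2))))
        ((X : Polynomial (ZMod 2)) ^ ((j : ℕ) * a i))) := by
  simp only [map_pow]
  set ξ := Ideal.Quotient.mk (Ideal.span {∑ i ∈ Finset.range p, (X : (ZMod 2)[X]) ^ i}) X
  have hξ : ξ ^ p = 1 := mk_X_pow_eq_one_of_geom_sum p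
  have hξ1 : IsUnit (ξ - 1) :=
    isUnit_mk_X_sub_one_of_geom_sum p (by simp [ZMod.natCast_eq_one_iff_odd.mpr hp])
  have hV : (Matrix.of fun i j : Fin r => ξ ^ ((j : ℕ) * a i)) =
      Matrix.vandermonde fun i => ξ ^ a i := by
    ext i j
    rw [Matrix.vandermonde_apply, ← pow_mul, mul_comm, Matrix.of_apply]
  rw [hV, Matrix.isUnit_iff_isUnit_det, Matrix.det_vandermonde, IsUnit.prod_univ_iff]
  refine fun i => IsUnit.prod_iff.mpr fun j hij => ?_
  exact isUnit_pow_sub_pow_of_gcd_eq_one hp.pos.ne' hξ hξ1 (ha j i (Finset.mem_Ioi.mp hij).ne')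
end

section
/- Let p be an odd integer, d a positive integer with gcd(d,p)=1, and f(x) = Σ_{i=0}^{p-1} f_i x^i ∈ F_2[x]/(1+x^p) with f(1)=0. Define g(x) by g_{p-1}=0, g_{p-d-1 mod p}=f_{p-1}, g_{d-1}=f_{d-1}, and g_{(p-(i+1)d-1) mod p} = f_{(p-id-1) mod p} + g_{(p-id-1) mod p} for i=1,...,p-3. Then (1+x^d)g(x) = f(x) in F_2[x]/(1+x^p). -/
/-!
Since `gcd(d, p) = 1`, the indices `σ i = (p - i d - 1) mod p`, `i < p`, run through every residue
mod `p` exactly once, and `σ (i + 1) + d ≡ σ i`. So multiplication by `x ^ d` moves the coefficient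
at `σ (i + 1)` to `σ i`, and `(1 + x ^ d) g = f` amounts to `g (σ (i + 1)) = f (σ i) + g (σ i)` for
all `i < p`. The hypotheses give this step for every `i` except `i = p - 2`; summed over all `i`
the steps telescope to `∑ f = 0`, so the missing one holds as well.
-/

open Polynomial Finset

/-- The paper's index `(p - i d - 1) mod p`. -/
def orbitIndex (p d i : ℕ) : ℕ := p - 1 - i * d % p

section orbitIndex

variable {p d : ℕ}

theorem orbitIndex_lt (hp : 0 < p) (i : ℕ) : orbitIndex p d i < p := by
  unfold orbitIndex; omega

@[simp] theorem orbitIndex_zero : orbitIndex p d 0 = p - 1 := by simp [orbitIndex]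

@[simp] theorem orbitIndex_self : orbitIndex p d p = p - 1 := by simp [orbitIndex]

theorem orbitIndex_succ_add_mod (hp : 0 < p) (i : ℕ) :
    (orbitIndex p d (i + 1) + d) % p = orbitIndex p d i := by
  have : NeZero p := ⟨hp.ne'⟩
  rw [← Nat.mod_eq_of_lt (orbitIndex_lt (d := d) hp i), ← ZMod.natCast_eq_natCast_iff']
  have h₁ := Nat.mod_lt ((i + 1) * d) hp
  have h₂ := Nat.mod_lt (i * d) hp
  simp only [orbitIndex]
  push_cast [Nat.cast_sub (show 1 ≤ p by omega),
    Nat.cast_sub (show (i + 1) * d % p ≤ p - 1 by omega),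
    Nat.cast_sub (show i * d % p ≤ p - 1 by omega), ZMod.natCast_mod, ZMod.natCast_self]
  ring

theorem orbitIndex_sub_one (hp : 0 < p) (hgcd : d.Coprime p) :
    orbitIndex p d (p - 1) = (d - 1) % p := by
  rcases Nat.eq_zero_or_pos d with rfl | hd
  · rw [(Nat.coprime_zero_left p).mp hgcd]; simp [orbitIndex]
  · have h := orbitIndex_succ_add_mod (d := d) hp (p - 1)
    rw [Nat.sub_add_cancel hp, orbitIndex_self] at h
    rw [← h, show p - 1 + d = d - 1 + p by omega, Nat.add_mod_right]

theorem sum_range_comp_orbitIndex {M : Type*} [AddCommMonoid M] (hgcd : d.Coprime p)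
    (F : ℕ → M) :
    ∑ i ∈ range p, F (orbitIndex p d i) = ∑ i ∈ range p, F i := by
  rcases Nat.eq_zero_or_pos p with rfl | hp
  · simp
  have hmaps : Set.MapsTo (orbitIndex p d) (range p) (range p) := fun i _ ↦ by
    simpa using orbitIndex_lt hp i
  have hinj : Set.InjOn (orbitIndex p d) (range p) := by
    intro i hi j hj hij
    simp only [coe_range, Set.mem_Iio] at hi hj
    have hmod : i * d % p = j * d % p := by
      unfold orbitIndex at hij
      have := Nat.mod_lt (i * d) hp
      have := Nat.mod_lt (j * d) hp
      omega
    have := Nat.ModEq.cancel_right_of_coprime (Nat.coprime_comm.mp hgcd) hmod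
    rwa [Nat.ModEq, Nat.mod_eq_of_lt hi, Nat.mod_eq_of_lt hj] at this
  have hbij := (Set.Finite.injOn_iff_bijOn_of_mapsTo (finite_toSet _) hmaps).mp hinj
  exact sum_nbij _ hmaps hinj hbij.surjOn fun _ _ ↦ rfl

theorem sum_range_succ_eq_sum_range_of_eq {M : Type*} [AddCommMonoid M] (F : ℕ → M)
    (h : F p = F 0) :
    ∑ i ∈ range p, F (i + 1) = ∑ i ∈ range p, F i := by
  cases p with
  | zero => simp
  | succ m => rw [sum_range_succ, h, sum_range_succ']

theorem sum_range_comp_orbitIndex_succ {M : Type*} [AddCommMonoid M] (F : ℕ → M) :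
    ∑ i ∈ range p, F (orbitIndex p d (i + 1)) = ∑ i ∈ range p, F (orbitIndex p d i) :=
  sum_range_succ_eq_sum_range_of_eq (fun i ↦ F (orbitIndex p d i)) (by simp)

theorem orbitIndex_recursion_of_forall_ne {M : Type*} [AddCommGroup M] (hgcd : d.Coprime p)
    {f g : ℕ → M} (hf : ∑ i ∈ range p, f i = 0) {k : ℕ} (hk : k < p)
    (hrec : ∀ i < p, i ≠ k →
      g (orbitIndex p d (i + 1)) = f (orbitIndex p d i) + g (orbitIndex p d i)) :
    g (orbitIndex p d (k + 1)) = f (orbitIndex p d k) + g (orbitIndex p d k) := by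
  set e : ℕ → M := fun i ↦
    g (orbitIndex p d (i + 1)) - (f (orbitIndex p d i) + g (orbitIndex p d i))
  have hsum : ∑ i ∈ range p, e i = 0 := by
    simp only [e, sum_sub_distrib, sum_add_distrib, sum_range_comp_orbitIndex_succ,
      sum_range_comp_orbitIndex hgcd, hf, zero_add, sub_self]
  rw [sum_eq_single_of_mem k (mem_range.mpr hk)
    fun i hi hik ↦ sub_eq_zero.mpr (hrec i (mem_range.mp hi) hik)] at hsum
  exact sub_eq_zero.mp hsum

theorem pow_mul_sum_eq_of_orbitIndex_recursion {A : Type*} [CommSemiring A] {y : A}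
    (hp : 0 < p) (hgcd : d.Coprime p) (hy : y ^ p = 1) {f g : ℕ → A}
    (hrec : ∀ i < p, g (orbitIndex p d (i + 1)) = f (orbitIndex p d i) + g (orbitIndex p d i)) :
    y ^ d * ∑ j ∈ range p, g j * y ^ j =
      ∑ j ∈ range p, f j * y ^ j + ∑ j ∈ range p, g j * y ^ j := by
  simp only [← sum_range_comp_orbitIndex hgcd (fun j ↦ _ * y ^ j)]
  calc y ^ d * ∑ i ∈ range p, g (orbitIndex p d i) * y ^ orbitIndex p d i
      = ∑ i ∈ range p, g (orbitIndex p d (i + 1)) * y ^ (orbitIndex p d (i + 1) + d) := by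
        rw [mul_sum, sum_range_comp_orbitIndex_succ fun j ↦ g j * y ^ (j + d)]
        exact sum_congr rfl fun i _ ↦ by ring
    _ = ∑ i ∈ range p, (f (orbitIndex p d i) + g (orbitIndex p d i)) * y ^ orbitIndex p d i := by
        refine sum_congr rfl fun i hi ↦ ?_
        rw [pow_eq_pow_mod _ hy, orbitIndex_succ_add_mod hp, hrec i (mem_range.mp hi)]
    _ = _ := by simp only [add_mul, sum_add_distrib]

end orbitIndex

theorem division_by_one_add_Xd_fast_general (p d : ℕ)
    (hgcd : Nat.gcd d p = 1) (f g : ℕ → ZMod 2)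
    (hf : ∑ i ∈ Finset.range p, f i = 0)
    (hg1 : g (p - 1) = 0)
    (hg2 : g (p - 1 - d % p) = f (p - 1))
    (hg3 : g ((d - 1) % p) = f ((d - 1) % p))
    (hgrec : ∀ i : ℕ, 1 ≤ i → i ≤ p - 3 →
      g (p - 1 - ((i + 1) * d) % p) = f (p - 1 - (i * d) % p) + g (p - 1 - (i * d) % p)) :
    Ideal.Quotient.mk (Ideal.span ({1 + X ^ p} : Set (Polynomial (ZMod 2))))
        ((1 + X ^ d) * ∑ i ∈ Finset.range p, C (g i) * X ^ i)
      = Ideal.Quotient.mk (Ideal.span ({1 + X ^ p} : Set (Polynomial (ZMod 2))))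
        (∑ i ∈ Finset.range p, C (f i) * X ^ i) := by
  rcases Nat.eq_zero_or_pos p with rfl | hp
  · simp
  set q := Ideal.Quotient.mk (Ideal.span ({1 + X ^ p} : Set (Polynomial (ZMod 2))))
  have hstep : ∀ i < p, i ≠ p - 2 →
      g (orbitIndex p d (i + 1)) = f (orbitIndex p d i) + g (orbitIndex p d i) := by
    intro i hi hi2
    rcases Nat.eq_zero_or_pos i with rfl | hi0
    · simpa [orbitIndex, hg1] using hg2
    rcases eq_or_ne i (p - 1) with rfl | hi1
    · rw [Nat.sub_add_cancel hp, orbitIndex_self, orbitIndex_sub_one hp hgcd, hg1, hg3,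
        CharTwo.add_self_eq_zero]
    · exact hgrec i hi0 (by omega)
  have hrec : ∀ i < p, g (orbitIndex p d (i + 1)) = f (orbitIndex p d i) + g (orbitIndex p d i) :=
    fun i hi ↦ if h : i = p - 2 then h ▸ orbitIndex_recursion_of_forall_ne hgcd hf (by omega) hstep
      else hstep i hi h
  have hy : q X ^ p = 1 := by
    rw [← map_pow, ← map_one q, Ideal.Quotient.eq, CharTwo.sub_eq_add, add_comm]
    exact Ideal.subset_span rfl
  have hshift := pow_mul_sum_eq_of_orbitIndex_recursion (f := fun j ↦ q (C (f j)))
    (g := fun j ↦ q (C (g j))) hp hgcd hy fun i hi ↦ by simp only [hrec i hi, map_add]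
  have hG : ∑ j ∈ range p, q (C (g j)) * q X ^ j + ∑ j ∈ range p, q (C (g j)) * q X ^ j = 0 := by
    simp only [← map_pow, ← map_mul, ← map_sum, ← map_add, CharTwo.add_self_eq_zero, map_zero]
  simp only [map_mul, map_add, map_one, map_sum, map_pow]
  linear_combination hshift + hG

theorem division_by_one_add_Xd_fast (p d : ℕ) (hp : Odd p) (hd : 0 < d)
    (hgcd : Nat.gcd d p = 1) (f g : ℕ → ZMod 2)
    (hf : ∑ i ∈ Finset.range p, f i = 0)
    (hg1 : g (p - 1) = 0)
    (hg2 : g (p - 1 - d % p) = f (p - 1))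
    (hg3 : g ((d - 1) % p) = f ((d - 1) % p))
    (hgrec : ∀ i : ℕ, 1 ≤ i → i ≤ p - 3 →
      g (p - 1 - ((i + 1) * d) % p) = f (p - 1 - (i * d) % p) + g (p - 1 - (i * d) % p)) :
    Ideal.Quotient.mk (Ideal.span ({1 + X ^ p} : Set (Polynomial (ZMod 2))))
        ((1 + X ^ d) * ∑ i ∈ Finset.range p, C (g i) * X ^ i)
      = Ideal.Quotient.mk (Ideal.span ({1 + X ^ p} : Set (Polynomial (ZMod 2))))
        (∑ i ∈ Finset.range p, C (f i) * X ^ i) :=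
  division_by_one_add_Xd_fast_general p d hgcd f g hf hg1 hg2 hg3 hgrec
end

section
/- For any positive integer r and distinct exponents a_1,...,a_r, the r×r Vandermonde matrix V (over any commutative ring containing elements x^{a_1},...,x^{a_r}) with V[i][j] = x^{(j-1)a_i} factors as V = L^{(1)} L^{(2)} ... L^{(r-1)} U^{(r-1)} U^{(r-2)} ... U^{(1)}, where U^{(ℓ)} is the identity except that its lower-right (ℓ+1)×(ℓ+1) block is unit upper bidiagonal with superdiagonal entries x^{a_1},...,x^{a_ℓ}, and L^{(ℓ)} is the identity except that its lower-right (ℓ+1)×(ℓ+1) block is lower bidiagonal with diagonal entries 1, x^{a_{r-ℓ+1}}+x^{a_{r-ℓ}}, ..., x^{a_r}+x^{a_{r-ℓ}} and subdiagonal entries all equal to 1. -/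
/-- The upper bidiagonal factor `U^{(ℓ)}`: the identity except that its lower-right
`(ℓ+1) × (ℓ+1)` block is unit upper bidiagonal with superdiagonal entries
`x^{a 0}, …, x^{a (ℓ-1)}` (i.e. `x^{a_1}, …, x^{a_ℓ}` in 1-based notation). -/
def vandermondeU (R : Type*) [CommRing R] (x : R) (a : ℕ → ℕ) (r ℓ : ℕ) :
    Matrix (Fin r) (Fin r) R :=
  Matrix.of fun i j =>
    if (i : ℕ) = (j : ℕ) then 1
    else if (j : ℕ) = (i : ℕ) + 1 ∧ r - ℓ - 1 ≤ (i : ℕ) then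
      x ^ a ((i : ℕ) - (r - ℓ - 1))
    else 0

/-- The lower bidiagonal factor `L^{(ℓ)}`: the identity except that its lower-right
`(ℓ+1) × (ℓ+1)` block is lower bidiagonal with diagonal entries
`1, x^{a_{r-ℓ+1}}+x^{a_{r-ℓ}}, …, x^{a_r}+x^{a_{r-ℓ}}` (1-based) and all
subdiagonal entries equal to `1`. -/
def vandermondeL (R : Type*) [CommRing R] (x : R) (a : ℕ → ℕ) (r ℓ : ℕ) :
    Matrix (Fin r) (Fin r) R :=
  Matrix.of fun i j =>
    if (i : ℕ) = (j : ℕ) then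
      (if (i : ℕ) ≤ r - ℓ - 1 then 1 else x ^ a (i : ℕ) + x ^ a (r - ℓ - 1))
    else if (j : ℕ) + 1 = (i : ℕ) ∧ r - ℓ - 1 ≤ (j : ℕ) then 1
    else 0


/-!
Write `y m = x ^ a m` and index matrices by `ℕ`. Newton interpolation of `z ↦ z ^ j` at the nodes
`y 0, y 1, …` reads `z ^ j = ∑_{k + d = j} ∏_{m < k} (z - y m) · h_d(y 0, …, y k)`, with `h_d` the
complete homogeneous symmetric polynomial; in matrix form the Vandermonde matrix is `G₀ H₀` with
`G₀ i k = ∏_{m < k} (y i - y m)` and `H₀ k j = h_{j-k}(y 0, …, y k)`.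

More generally `G_s = newtonLower y s` and `H_s = newtonUpper y s` are the identity on the first
`s` indices, and `G_s i j = ∏_{s ≤ m < j} (y i - y m)`, `H_s i j = h_{j-i}(y 0, …, y (i - s))`
(for `i ≤ j`) beyond them. Then `G_s = G_{s+1} L_s` and `H_s = U_s H_{s+1}` for the bidiagonal
factors of the theorem with `s = r - ℓ - 1`; characteristic `2` enters in the first identity,
through `y c + y s = y c - y s`. Since `G_s` is lower and `H_s` upper triangular, leading
`r × r` blocks multiply like the full matrices.
-/

open Finset

section CompleteHomogeneous

variable {R : Type*} [CommRing R] (y : ℕ → R)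

/-- `completeHomogeneous y d n` is `h_d(y 0, …, y (n - 1))`. -/
def completeHomogeneous : ℕ → ℕ → R
  | 0, _ => 1
  | _ + 1, 0 => 0
  | d + 1, n + 1 => completeHomogeneous (d + 1) n + y n * completeHomogeneous d (n + 1)

@[simp] lemma completeHomogeneous_zero_left (n : ℕ) : completeHomogeneous y 0 n = 1 := by
  rw [completeHomogeneous]

@[simp] lemma completeHomogeneous_succ_zero (d : ℕ) : completeHomogeneous y (d + 1) 0 = 0 := by
  rw [completeHomogeneous]

lemma completeHomogeneous_zero_right (d : ℕ) :
    completeHomogeneous y d 0 = if d = 0 then 1 else 0 := by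
  cases d <;> simp

lemma completeHomogeneous_succ_succ (d n : ℕ) :
    completeHomogeneous y (d + 1) (n + 1)
      = completeHomogeneous y (d + 1) n + y n * completeHomogeneous y d (n + 1) := by
  rw [completeHomogeneous]

theorem sum_antidiagonal_prod_sub_mul_completeHomogeneous (z : R) (j : ℕ) :
    ∑ p ∈ antidiagonal j, (∏ m ∈ range p.1, (z - y m)) * completeHomogeneous y p.2 (p.1 + 1)
      = z ^ j := by
  set P : ℕ → R := fun k => ∏ m ∈ range k, (z - y m) with hP
  set h := completeHomogeneous y
  induction j with
  | zero => simp [h]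
  | succ j ih =>
    -- expand `∑_{k + d = j + 1} P k * h d k` from either end of the antidiagonal
    have hends : P (j + 1) + ∑ p ∈ antidiagonal j, P p.1 * h (p.2 + 1) p.1
        = ∑ p ∈ antidiagonal j, P (p.1 + 1) * h p.2 (p.1 + 1) := by
      have h₁ := Nat.sum_antidiagonal_succ (n := j) (f := fun p => P p.1 * h p.2 p.1)
      have h₂ := Nat.sum_antidiagonal_succ' (n := j) (f := fun p => P p.1 * h p.2 p.1)
      simp only [h, completeHomogeneous_succ_zero, completeHomogeneous_zero_left, mul_zero,
        mul_one, zero_add] at h₁ h₂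
      rw [← h₁, h₂]
    calc ∑ p ∈ antidiagonal (j + 1), P p.1 * h p.2 (p.1 + 1)
        = P (j + 1) + ∑ p ∈ antidiagonal j, P p.1 * h (p.2 + 1) (p.1 + 1) := by
          simp [Nat.sum_antidiagonal_succ', h]
      _ = P (j + 1) + ∑ p ∈ antidiagonal j, P p.1 * h (p.2 + 1) p.1
            + ∑ p ∈ antidiagonal j, y p.1 * (P p.1 * h p.2 (p.1 + 1)) := by
          simp only [h, completeHomogeneous_succ_succ, mul_add, sum_add_distrib, add_assoc]
          congr 2
          exact sum_congr rfl fun p _ => by ring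
      _ = ∑ p ∈ antidiagonal j, (P (p.1 + 1) + y p.1 * P p.1) * h p.2 (p.1 + 1) := by
          rw [hends, ← sum_add_distrib]
          exact sum_congr rfl fun p _ => by ring
      _ = z ^ (j + 1) := by
          simp only [hP, prod_range_succ, ← ih, pow_succ', mul_sum]
          exact sum_congr rfl fun p _ => by ring

end CompleteHomogeneous

lemma sum_range_eq_add_of_eq_zero {M : Type*} [AddCommMonoid M] (f : ℕ → M) {c r : ℕ}
    (hc : c < r) (hf : ∀ k, k ≠ c → k ≠ c + 1 → f k = 0) (hr : f r = 0) :
    ∑ k ∈ range r, f k = f c + f (c + 1) := by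
  rw [← add_zero (∑ k ∈ range r, f k), ← hr, ← sum_range_succ, ← sum_pair c.lt_succ_self.ne]
  refine (sum_subset (fun k hk => ?_) fun k _ hk => ?_).symm
  · simp only [mem_insert, mem_singleton] at hk
    simp only [mem_range]
    omega
  · simp only [mem_insert, mem_singleton, not_or] at hk
    exact hf k hk.1 hk.2

def leadingBlock {α : Type*} (r : ℕ) (M : Matrix ℕ ℕ α) : Matrix (Fin r) (Fin r) α :=
  M.submatrix Fin.val Fin.val

@[simp] lemma leadingBlock_apply {α : Type*} (r : ℕ) (M : Matrix ℕ ℕ α) (i j : Fin r) :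
    leadingBlock r M i j = M i j := rfl

section NewtonFactors

variable {R : Type*} [CommRing R] (y : ℕ → R)

lemma leadingBlock_mul_leadingBlock_apply {r : ℕ} (A B : Matrix ℕ ℕ R) (i j : Fin r) :
    (leadingBlock r A * leadingBlock r B) i j = ∑ k ∈ range r, A i k * B k j := by
  simp [Matrix.mul_apply, Fin.sum_univ_eq_sum_range (fun k => A i k * B k j)]

def newtonLower (s : ℕ) : Matrix ℕ ℕ R :=
  Matrix.of fun i j =>
    if s ≤ i ∧ s ≤ j then ∏ m ∈ Ico s j, (y i - y m) else if i = j then 1 else 0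

def newtonUpper (s : ℕ) : Matrix ℕ ℕ R :=
  Matrix.of fun i j =>
    if s ≤ i then (if i ≤ j then completeHomogeneous y (j - i) (i + 1 - s) else 0)
    else if i = j then 1 else 0

def lowerBidiag (s : ℕ) : Matrix ℕ ℕ R :=
  Matrix.of fun i j =>
    if i = j then (if i ≤ s then 1 else y i + y s) else if j + 1 = i ∧ s ≤ j then 1 else 0

def upperBidiag (s : ℕ) : Matrix ℕ ℕ R :=
  Matrix.of fun i j => if i = j then 1 else if j = i + 1 ∧ s ≤ i then y (i - s) else 0

@[simp] lemma lowerBidiag_apply_self (s c : ℕ) :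
    lowerBidiag y s c c = if c ≤ s then 1 else y c + y s := if_pos rfl

@[simp] lemma lowerBidiag_apply_succ (s c : ℕ) :
    lowerBidiag y s (c + 1) c = if s ≤ c then 1 else 0 := by
  simp [lowerBidiag]

lemma newtonLower_apply_of_lt {s i j : ℕ} (h : i < j) : newtonLower y s i j = 0 := by
  simp only [newtonLower, Matrix.of_apply]
  split_ifs with hs
  · exact prod_eq_zero (mem_Ico.2 ⟨hs.1, h⟩) (sub_self _)
  · omega
  · rfl

lemma newtonUpper_apply_of_lt {s i j : ℕ} (h : j < i) : newtonUpper y s i j = 0 := by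
  simp only [newtonUpper, Matrix.of_apply]
  split_ifs <;> first | omega | rfl

lemma newtonUpper_succ_apply_of_le {s i : ℕ} (hs : s ≤ i) (j : ℕ) :
    newtonUpper y (s + 1) i j = if i ≤ j then completeHomogeneous y (j - i) (i - s) else 0 := by
  obtain rfl | hs := hs.eq_or_lt
  · obtain hj | rfl | hj := lt_trichotomy j s
    · simp [newtonUpper, hj.ne', hj.not_ge]
    · simp [newtonUpper]
    · simp [newtonUpper, completeHomogeneous_zero_right, hj.le, hj.ne, Nat.sub_ne_zero_of_lt hj]
  · simp [newtonUpper, hs]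

lemma newtonLower_succ_mul_lowerBidiag_apply [CharP R 2] (s i c : ℕ) :
    newtonLower y (s + 1) i c * lowerBidiag y s c c
      + newtonLower y (s + 1) i (c + 1) * lowerBidiag y s (c + 1) c = newtonLower y s i c := by
  by_cases hic : i < c
  · simp [newtonLower_apply_of_lt y hic, newtonLower_apply_of_lt y (hic.trans c.lt_succ_self)]
  push Not at hic
  obtain hcs | rfl | hcs := lt_trichotomy c s
  · simp [newtonLower, hcs.le, hcs.not_ge]
  · obtain rfl | hci := hic.eq_or_lt
    · simp [newtonLower]
    · simp [newtonLower, hic, hci, hci.ne']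
  · have hsi : s < i := hcs.trans_le hic
    have e₁ : newtonLower y (s + 1) i c = ∏ m ∈ Ico (s + 1) c, (y i - y m) := if_pos ⟨hsi, hcs⟩
    have e₂ : newtonLower y (s + 1) i (c + 1) = ∏ m ∈ Ico (s + 1) (c + 1), (y i - y m) :=
      if_pos ⟨hsi, by omega⟩
    have e₃ : newtonLower y s i c = ∏ m ∈ Ico s c, (y i - y m) := if_pos ⟨hsi.le, hcs.le⟩
    rw [e₁, e₂, e₃, lowerBidiag_apply_self, if_neg hcs.not_ge, lowerBidiag_apply_succ,
      if_pos hcs.le, prod_Ico_succ_top (by omega), prod_eq_prod_Ico_succ_bot hcs]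
    linear_combination (∏ m ∈ Ico (s + 1) c, (y i - y m)) * CharTwo.add_self_eq_zero (y s)

lemma upperBidiag_mul_newtonUpper_succ_apply (s i j : ℕ) :
    upperBidiag y s i i * newtonUpper y (s + 1) i j
      + upperBidiag y s i (i + 1) * newtonUpper y (s + 1) (i + 1) j = newtonUpper y s i j := by
  by_cases hji : j < i
  · simp [newtonUpper_apply_of_lt y hji, newtonUpper_apply_of_lt y (hji.trans i.lt_succ_self)]
  push Not at hji
  by_cases hsi : s ≤ i
  · obtain ⟨d, rfl⟩ := Nat.exists_eq_add_of_le hji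
    rw [newtonUpper_succ_apply_of_le y hsi, newtonUpper_succ_apply_of_le y (hsi.trans i.le_succ)]
    simp only [upperBidiag, newtonUpper, Matrix.of_apply, if_pos hsi, if_pos hji, if_true,
      show i + 1 - s = i - s + 1 by omega]
    cases d with
    | zero => simp
    | succ d =>
      simp [completeHomogeneous_succ_succ, show i + (d + 1) - (i + 1) = d by omega, hsi.not_gt]
  · simp [newtonUpper, upperBidiag, hsi, show ¬ s < i by omega]

variable (r : ℕ)

theorem leadingBlock_newtonLower_succ_mul_lowerBidiag [CharP R 2] (s : ℕ) :
    leadingBlock r (newtonLower y (s + 1)) * leadingBlock r (lowerBidiag y s)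
      = leadingBlock r (newtonLower y s) := by
  ext i c
  rw [leadingBlock_mul_leadingBlock_apply, sum_range_eq_add_of_eq_zero _ c.isLt,
    newtonLower_succ_mul_lowerBidiag_apply, leadingBlock_apply]
  · intro k hkc hkc'
    simp [lowerBidiag, hkc, hkc'.symm]
  · rw [newtonLower_apply_of_lt y i.isLt, zero_mul]

theorem leadingBlock_upperBidiag_mul_newtonUpper_succ (s : ℕ) :
    leadingBlock r (upperBidiag y s) * leadingBlock r (newtonUpper y (s + 1))
      = leadingBlock r (newtonUpper y s) := by
  ext i j
  rw [leadingBlock_mul_leadingBlock_apply, sum_range_eq_add_of_eq_zero _ i.isLt,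
    upperBidiag_mul_newtonUpper_succ_apply, leadingBlock_apply]
  · intro k hki hki'
    simp [upperBidiag, Ne.symm hki, hki']
  · rw [newtonUpper_apply_of_lt y j.isLt, mul_zero]

theorem leadingBlock_newtonLower_eq_one : leadingBlock r (newtonLower y (r - 1)) = 1 := by
  ext i j
  have := i.isLt
  have := j.isLt
  simp only [leadingBlock_apply, newtonLower, Matrix.of_apply, Matrix.one_apply, Fin.ext_iff]
  split_ifs <;> first | rfl | omega | skip
  rw [show (j : ℕ) = r - 1 by omega, Ico_self, prod_empty]

theorem leadingBlock_newtonUpper_eq_one : leadingBlock r (newtonUpper y (r - 1)) = 1 := by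
  ext i j
  have := i.isLt
  have := j.isLt
  simp only [leadingBlock_apply, newtonUpper, Matrix.of_apply, Matrix.one_apply, Fin.ext_iff]
  split_ifs <;> first | rfl | omega | skip
  rw [show (j : ℕ) - i = 0 by omega, completeHomogeneous_zero_left]

theorem leadingBlock_newtonLower_mul_newtonUpper :
    leadingBlock r (newtonLower y 0) * leadingBlock r (newtonUpper y 0)
      = Matrix.vandermonde fun i : Fin r => y i := by
  ext i j
  rw [leadingBlock_mul_leadingBlock_apply, Matrix.vandermonde_apply,
    ← sum_antidiagonal_prod_sub_mul_completeHomogeneous y (y i) j,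
    Nat.sum_antidiagonal_eq_sum_range_succ
      (fun k d => (∏ m ∈ range k, (y i - y m)) * completeHomogeneous y d (k + 1))]
  refine (sum_subset (range_subset_range.2 j.isLt) fun k _ hk => ?_).symm.trans
    (sum_congr rfl fun k hk => ?_)
  · simp only [mem_range, Nat.lt_succ_iff] at hk
    simp [newtonUpper, hk]
  · simp only [mem_range, Nat.lt_succ_iff] at hk
    simp [newtonLower, newtonUpper, hk]

end NewtonFactors

section VandermondeFactors

variable {R : Type*} [CommRing R] (x : R) (a : ℕ → ℕ) (r : ℕ)

lemma vandermondeL_eq_leadingBlock (ℓ : ℕ) :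
    vandermondeL R x a r ℓ = leadingBlock r (lowerBidiag (x ^ a ·) (r - ℓ - 1)) := rfl

lemma vandermondeU_eq_leadingBlock (ℓ : ℕ) :
    vandermondeU R x a r ℓ = leadingBlock r (upperBidiag (x ^ a ·) (r - ℓ - 1)) := rfl

theorem prod_vandermondeL [CharP R 2] {k : ℕ} (hk : k ≤ r - 1) :
    ((List.range k).map fun t => vandermondeL R x a r (t + 1)).prod
      = leadingBlock r (newtonLower (x ^ a ·) (r - 1 - k)) := by
  induction k with
  | zero => simp [leadingBlock_newtonLower_eq_one]
  | succ k ih =>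
    rw [List.range_succ, List.map_append, List.prod_append, ih (by omega), List.map_singleton,
      List.prod_singleton, vandermondeL_eq_leadingBlock,
      show r - (k + 1) - 1 = r - 1 - (k + 1) by omega,
      show r - 1 - k = r - 1 - (k + 1) + 1 by omega,
      leadingBlock_newtonLower_succ_mul_lowerBidiag]

theorem prod_reverse_vandermondeU {k : ℕ} (hk : k ≤ r - 1) :
    ((List.range k).reverse.map fun t => vandermondeU R x a r (t + 1)).prod
      = leadingBlock r (newtonUpper (x ^ a ·) (r - 1 - k)) := by
  induction k with
  | zero => simp [leadingBlock_newtonUpper_eq_one]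
  | succ k ih =>
    rw [List.range_succ, List.reverse_append, List.reverse_singleton, List.singleton_append,
      List.map_cons, List.prod_cons, ih (by omega), vandermondeU_eq_leadingBlock,
      show r - (k + 1) - 1 = r - 1 - (k + 1) by omega,
      show r - 1 - k = r - 1 - (k + 1) + 1 by omega,
      leadingBlock_upperBidiag_mul_newtonUpper_succ]

end VandermondeFactors

theorem vandermonde_LU_factorization_general (R : Type*) [CommRing R] [CharP R 2]
    (r : ℕ) (x : R) (a : ℕ → ℕ) :
    (Matrix.of fun i j : Fin r => x ^ ((j : ℕ) * a (i : ℕ)))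
      = ((List.range (r - 1)).map (fun t => vandermondeL R x a r (t + 1))).prod *
        (((List.range (r - 1)).reverse).map (fun t => vandermondeU R x a r (t + 1))).prod := by
  rw [prod_vandermondeL x a r le_rfl, prod_reverse_vandermondeU x a r le_rfl, Nat.sub_self,
    leadingBlock_newtonLower_mul_newtonUpper]
  ext i j
  simp [pow_mul']

theorem vandermonde_LU_factorization (R : Type*) [CommRing R] [CharP R 2]
    (r : ℕ) (hr : 0 < r) (x : R) (a : ℕ → ℕ)
    (ha : ∀ i j : ℕ, i < r → j < r → a i = a j → i = j) :
    (Matrix.of fun i j : Fin r => x ^ ((j : ℕ) * a (i : ℕ)))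
      = ((List.range (r - 1)).map (fun t => vandermondeL R x a r (t + 1))).prod *
        (((List.range (r - 1)).reverse).map (fun t => vandermondeU R x a r (t + 1))).prod :=
  vandermonde_LU_factorization_general R r x a
end
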